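/- arXiv:1606.05615 — 4 statements merged into one kernel-verified Lean document; each statement's English description precedes it below -/
import Mathlib

section
/- A function f : X → ℝ on a box X = ∏ᵢ Xᵢ ⊆ ℝⁿ is submodular if and only if it satisfies the weak DR property: for all a ≤ b in X, for every coordinate i with aᵢ = bᵢ, and every k ≥ 0 such that a + k·eᵢ ∈ X and b + k·eᵢ ∈ X, one has f(a + k·eᵢ) − f(a) ≥ f(b + k·eᵢ) − f(b). -/
/-- `f` is submodular on `X`. -/
def SubmodularOn {n : ℕ} (f : (Fin n → ℝ) → ℝ) (X : Set (Fin n → ℝ)) : Prop :=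
  ∀ x ∈ X, ∀ y ∈ X, f x + f y ≥ f (x ⊔ y) + f (x ⊓ y)

/-- The weak diminishing returns property of `f` on `X`. -/
def WeakDROn {n : ℕ} (f : (Fin n → ℝ) → ℝ) (X : Set (Fin n → ℝ)) : Prop :=
  ∀ a ∈ X, ∀ b ∈ X, a ≤ b → ∀ i : Fin n, a i = b i → ∀ k : ℝ, 0 ≤ k →
    a + k • (Pi.single i 1 : Fin n → ℝ) ∈ X → b + k • (Pi.single i 1 : Fin n → ℝ) ∈ X →
    f (a + k • (Pi.single i 1 : Fin n → ℝ)) - f a ≥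
      f (b + k • (Pi.single i 1 : Fin n → ℝ)) - f b

/-- A function on a box is submodular iff it satisfies the weak DR property. -/
theorem submodular_iff_weakDR {n : ℕ} (u v : Fin n → ℝ) (huv : u ≤ v)
    (f : (Fin n → ℝ) → ℝ) :
    SubmodularOn f (Set.Icc u v) ↔ WeakDROn f (Set.Icc u v) := by
  classical
  constructor
  · intro hsub a ha b hb hab i hi k hk ha' hb'
    have h := hsub _ ha' b hb
    have h1 : (a + k • (Pi.single i 1 : Fin n → ℝ)) ⊔ b
        = b + k • (Pi.single i 1 : Fin n → ℝ) := by
      funext j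
      by_cases hji : j = i
      · subst hji
        simp only [Pi.sup_apply, Pi.add_apply, Pi.smul_apply, Pi.single_eq_same,
          smul_eq_mul, mul_one, hi]
        exact max_eq_left (by linarith)
      · simp only [Pi.sup_apply, Pi.add_apply, Pi.smul_apply, Pi.single_eq_of_ne hji,
          smul_eq_mul, mul_zero, add_zero]
        exact max_eq_right (hab j)
    have h2 : (a + k • (Pi.single i 1 : Fin n → ℝ)) ⊓ b = a := by
      funext j
      by_cases hji : j = i
      · subst hji
        simp only [Pi.inf_apply, Pi.add_apply, Pi.smul_apply, Pi.single_eq_same,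
          smul_eq_mul, mul_one, hi]
        exact min_eq_right (by linarith)
      · simp only [Pi.inf_apply, Pi.add_apply, Pi.smul_apply, Pi.single_eq_of_ne hji,
          smul_eq_mul, mul_zero, add_zero]
        exact min_eq_left (hab j)
    rw [h1, h2] at h
    linarith
  · intro hDR x hx y hy
    set A : Finset (Fin n) → (Fin n → ℝ) :=
      fun T j => if j ∈ T then x j else min (x j) (y j) with hA
    set B : Finset (Fin n) → (Fin n → ℝ) :=
      fun T j => if j ∈ T then max (x j) (y j) else y j with hB
    have hmemA : ∀ T, A T ∈ Set.Icc u v := by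
      intro T
      constructor <;> intro j <;> simp only [hA] <;> split
      · exact hx.1 j
      · exact le_min (hx.1 j) (hy.1 j)
      · exact hx.2 j
      · exact min_le_of_left_le (hx.2 j)
    have hmemB : ∀ T, B T ∈ Set.Icc u v := by
      intro T
      constructor <;> intro j <;> simp only [hB] <;> split
      · exact le_max_of_le_left (hx.1 j)
      · exact hy.1 j
      · exact max_le (hx.2 j) (hy.2 j)
      · exact hy.2 j
    have hAB : ∀ T, A T ≤ B T := by
      intro T j
      simp only [hA, hB]
      split
      · exact le_max_left _ _
      · exact min_le_right _ _
    have key : ∀ T : Finset (Fin n), f (A T) - f (x ⊓ y) ≥ f (B T) - f y := by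
      intro T
      induction T using Finset.induction with
      | empty =>
          have hA0 : A ∅ = x ⊓ y := by
            funext j; simp [hA, Pi.inf_apply]
          have hB0 : B ∅ = y := by
            funext j; simp [hB]
          rw [hA0, hB0]; simp
      | @insert j T hj ih =>
          rcases le_total (x j) (y j) with hxy | hxy
          · have hA1 : A (insert j T) = A T := by
              funext j'
              simp only [hA, Finset.mem_insert]
              by_cases h' : j' = j
              · subst h'; simp [hj, min_eq_left hxy]
              · simp [h']
            have hB1 : B (insert j T) = B T := by
              funext j'
              simp only [hB, Finset.mem_insert]
              by_cases h' : j' = j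
              · subst h'; simp [hj, max_eq_right hxy]
              · simp [h']
            rw [hA1, hB1]; exact ih
          · set k : ℝ := x j - y j with hkdef
            have hk : 0 ≤ k := by simp [hkdef]; linarith
            have hA1 : A (insert j T) = A T + k • (Pi.single j 1 : Fin n → ℝ) := by
              funext j'
              simp only [Pi.add_apply, Pi.smul_apply, smul_eq_mul]
              by_cases h' : j' = j
              · subst h'
                simp only [hA, Finset.mem_insert, Pi.single_eq_same, mul_one,
                  if_pos (Or.inl rfl), if_neg hj, min_eq_right hxy]
                simp
                rw [hkdef]; ring
              · simp only [hA, Finset.mem_insert, Pi.single_eq_of_ne h', mul_zero, add_zero]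
                simp [h']
            have hB1 : B (insert j T) = B T + k • (Pi.single j 1 : Fin n → ℝ) := by
              funext j'
              simp only [Pi.add_apply, Pi.smul_apply, smul_eq_mul]
              by_cases h' : j' = j
              · subst h'
                simp only [hB, Finset.mem_insert, Pi.single_eq_same, mul_one,
                  if_pos (Or.inl rfl), if_neg hj, max_eq_left hxy]
                simp
                rw [hkdef]; ring
              · simp only [hB, Finset.mem_insert, Pi.single_eq_of_ne h', mul_zero, add_zero]
                simp [h']
            have heq : A T j = B T j := by
              simp [hA, hB, hj, min_eq_right hxy]
            have step := hDR (A T) (hmemA T) (B T) (hmemB T) (hAB T) j heq k hk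
              (by rw [← hA1]; exact hmemA _) (by rw [← hB1]; exact hmemB _)
            rw [← hA1, ← hB1] at step
            linarith
    have hAu : A Finset.univ = x := by
      funext j; simp [hA]
    have hBu : B Finset.univ = x ⊔ y := by
      funext j; simp [hB, Pi.sup_apply]
    have := key Finset.univ
    rw [hAu, hBu] at this
    linarith
end

section
/- A function f : X → ℝ on a box X ⊆ ℝⁿ satisfies the DR property (for all a ≤ b in X, all i, all k ≥ 0 with a + k·eᵢ, b + k·eᵢ ∈ X: f(a + k·eᵢ) − f(a) ≥ f(b + k·eᵢ) − f(b)) if and only if f is submodular and coordinate-wise concave (for all x ∈ X, i, k, l ≥ 0 with the relevant points in X: f(x + k·eᵢ) − f(x) ≥ f(x + (k+l)·eᵢ) − f(x + l·eᵢ)). -/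
/-- The diminishing returns (DR) property of `f` on `X`. -/
def DROn {n : ℕ} (f : (Fin n → ℝ) → ℝ) (X : Set (Fin n → ℝ)) : Prop :=
  ∀ a ∈ X, ∀ b ∈ X, a ≤ b → ∀ i : Fin n, ∀ k : ℝ, 0 ≤ k →
    a + k • (Pi.single i 1 : Fin n → ℝ) ∈ X → b + k • (Pi.single i 1 : Fin n → ℝ) ∈ X →
    f (a + k • (Pi.single i 1 : Fin n → ℝ)) - f a ≥
      f (b + k • (Pi.single i 1 : Fin n → ℝ)) - f b

/-- `f` is coordinate-wise concave on `X`. -/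
def CoordinatewiseConcaveOn {n : ℕ} (f : (Fin n → ℝ) → ℝ) (X : Set (Fin n → ℝ)) : Prop :=
  ∀ x ∈ X, ∀ i : Fin n, ∀ k l : ℝ, 0 ≤ k → 0 ≤ l →
    x + k • (Pi.single i 1 : Fin n → ℝ) ∈ X → x + l • (Pi.single i 1 : Fin n → ℝ) ∈ X →
    x + (k + l) • (Pi.single i 1 : Fin n → ℝ) ∈ X →
    f (x + k • (Pi.single i 1 : Fin n → ℝ)) - f x ≥
      f (x + (k + l) • (Pi.single i 1 : Fin n → ℝ)) - f (x + l • (Pi.single i 1 : Fin n → ℝ))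

/-!
(⇒) Coordinate-wise concavity is the DR property for the comparable pair
`x ≤ x + l eᵢ`. Chaining the DR property along the coordinates gives it for every
nonnegative increment `c`; with `a = x ⊓ y`, `b = y` and `c = x - x ⊓ y` this is submodularity,
since `y + c = x ⊔ y`. (⇐) Given `a ≤ b`, put `l = bᵢ - aᵢ`. Then `a + (k + l) eᵢ` and `b`
have join `b + k eᵢ` and meet `a + l eᵢ`, so submodularity bounds
`f (b + k eᵢ) - f b` by `f (a + (k + l) eᵢ) - f (a + l eᵢ)`, and concavity along `eᵢ` bounds
that by `f (a + k eᵢ) - f a`.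
-/

lemma isSublattice_Icc {α : Type*} [Lattice α] (u v : α) : IsSublattice (Set.Icc u v) :=
  ⟨fun _ hx _ hy => ⟨le_sup_of_le_left hx.1, sup_le hx.2 hy.2⟩,
    fun _ hx _ hy => ⟨le_inf hx.1 hy.1, inf_le_of_left_le hx.2⟩⟩

def DRAlong {E : Type*} [AddCommGroup E] [PartialOrder E] (f : E → ℝ) (X : Set E) (c : E) :
    Prop :=
  ∀ a ∈ X, ∀ b ∈ X, a ≤ b → a + c ∈ X → b + c ∈ X → f (b + c) - f b ≤ f (a + c) - f a

namespace DRAlong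

variable {E : Type*} [AddCommGroup E] [PartialOrder E] {f : E → ℝ} {X : Set E} {c d : E}

lemma zero : DRAlong f X 0 := by
  intro a _ b _ _ _ _
  simp

lemma add [IsOrderedAddMonoid E] (hX : X.OrdConnected) (hc : 0 ≤ c) (hd : 0 ≤ d)
    (hfc : DRAlong f X c) (hfd : DRAlong f X d) : DRAlong f X (c + d) := by
  intro a ha b hb hab hacd hbcd
  have mem {x : E} (hx : x ∈ X) (hxcd : x + (c + d) ∈ X) : x + c ∈ X :=
    hX.out hx hxcd
      ⟨le_add_of_nonneg_right hc, (add_le_add_iff_left x).2 (le_add_of_nonneg_right hd)⟩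
  have hac := mem ha hacd
  have hbc := mem hb hbcd
  simp only [← add_assoc] at hacd hbcd ⊢
  have first := hfc a ha b hb hab hac hbc
  have second := hfd (a + c) hac (b + c) hbc (add_le_add hab le_rfl) hacd hbcd
  linarith

end DRAlong

variable {n : ℕ} {f : (Fin n → ℝ) → ℝ} {X : Set (Fin n → ℝ)}

lemma smul_single_one_nonneg {k : ℝ} (hk : 0 ≤ k) (i : Fin n) :
    (0 : Fin n → ℝ) ≤ k • Pi.single i 1 :=
  smul_nonneg hk (Pi.single_nonneg.2 zero_le_one)

lemma DROn.drAlong_smul_single (hf : DROn f X) (i : Fin n) {k : ℝ} (hk : 0 ≤ k) :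
    DRAlong f X (k • Pi.single i 1) :=
  fun a ha b hb hab hak hbk => hf a ha b hb hab i k hk hak hbk

lemma DROn.drAlong (hX : X.OrdConnected) (hf : DROn f X) {c : Fin n → ℝ} (hc : 0 ≤ c) :
    DRAlong f X c := by
  rw [← Finset.univ_sum_single c]
  refine (Finset.sum_induction _ (fun d => 0 ≤ d ∧ DRAlong f X d)
    (fun _ _ hd hd' => ⟨add_nonneg hd.1 hd'.1, hd.2.add hX hd.1 hd'.1 hd'.2⟩)
    ⟨le_rfl, DRAlong.zero⟩ fun i _ => ?_).2
  rw [show Pi.single i (c i) = c i • Pi.single i 1 by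
    rw [← Pi.single_smul', smul_eq_mul, mul_one]]
  exact ⟨smul_single_one_nonneg (hc i) i, hf.drAlong_smul_single i (hc i)⟩

lemma DROn.submodularOn (hX : X.OrdConnected) (hX' : IsSublattice X) (hf : DROn f X) :
    SubmodularOn f X := by
  intro x hx y hy
  have hxy : x ⊓ y + (x - x ⊓ y) = x := add_sub_cancel _ _
  have hyx : y + (x - x ⊓ y) = x ⊔ y := by
    rw [add_sub_assoc', add_comm y x, ← inf_add_sup, add_sub_cancel_left]
  have h := hf.drAlong hX (sub_nonneg.2 inf_le_left) (x ⊓ y) (hX'.infClosed hx hy) y hy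
    inf_le_right (hxy ▸ hx) (hyx ▸ hX'.supClosed hx hy)
  rw [hxy, hyx] at h
  linarith

lemma DROn.coordinatewiseConcaveOn (hf : DROn f X) : CoordinatewiseConcaveOn f X := by
  intro x hx i k l hk hl hxk hxl hxkl
  have hshift : x + l • Pi.single i 1 + k • Pi.single i 1 = x + (k + l) • Pi.single i 1 := by
    rw [add_smul]
    abel
  have h := hf x hx _ hxl (le_add_of_nonneg_right (smul_single_one_nonneg hl i)) i k hk hxk
    (hshift ▸ hxkl)
  rwa [hshift] at h

lemma add_smul_single_sup_of_le {a b : Fin n → ℝ} (hab : a ≤ b) (i : Fin n) {k : ℝ}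
    (hk : 0 ≤ k) :
    (a + (k + (b i - a i)) • Pi.single i 1) ⊔ b = b + k • Pi.single i 1 := by
  funext j
  rcases eq_or_ne j i with rfl | hj
  · simp only [Pi.sup_apply, Pi.add_apply, Pi.smul_apply, Pi.single_eq_same, smul_eq_mul,
      mul_one]
    rw [sup_eq_left.2 (by linarith)]
    ring
  · simpa [Pi.single_eq_of_ne hj] using hab j

lemma add_smul_single_inf_of_le {a b : Fin n → ℝ} (hab : a ≤ b) (i : Fin n) {k : ℝ}
    (hk : 0 ≤ k) :
    (a + (k + (b i - a i)) • Pi.single i 1) ⊓ b = a + (b i - a i) • Pi.single i 1 := by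
  funext j
  rcases eq_or_ne j i with rfl | hj
  · simp only [Pi.inf_apply, Pi.add_apply, Pi.smul_apply, Pi.single_eq_same, smul_eq_mul,
      mul_one]
    rw [inf_eq_right.2 (by linarith)]
    ring
  · simpa [Pi.single_eq_of_ne hj] using hab j

lemma DROn.of_submodularOn_of_coordinatewiseConcaveOn (hX : X.OrdConnected)
    (hs : SubmodularOn f X) (hc : CoordinatewiseConcaveOn f X) : DROn f X := by
  intro a ha b hb hab i k hk hak hbk
  set l := b i - a i
  have hl : 0 ≤ l := sub_nonneg.2 (hab i)
  have hsup := add_smul_single_sup_of_le hab i hk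
  have hinf := add_smul_single_inf_of_le hab i hk
  have hal : a + l • Pi.single i 1 ∈ X :=
    hX.out ha hb ⟨le_add_of_nonneg_right (smul_single_one_nonneg hl i), hinf ▸ inf_le_right⟩
  have hakl : a + (k + l) • Pi.single i 1 ∈ X :=
    hX.out ha hbk ⟨le_add_of_nonneg_right (smul_single_one_nonneg (add_nonneg hk hl) i),
      hsup ▸ le_sup_left⟩
  have hsub := hs _ hakl b hb
  rw [hsup, hinf] at hsub
  have hconc := hc a ha i k l hk hl hak hal hakl
  linarith

theorem dr_iff_submodular_and_coordinatewiseConcave_general {n : ℕ} (u v : Fin n → ℝ)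
    (f : (Fin n → ℝ) → ℝ) :
    DROn f (Set.Icc u v) ↔
      SubmodularOn f (Set.Icc u v) ∧ CoordinatewiseConcaveOn f (Set.Icc u v) :=
  ⟨fun hf => ⟨hf.submodularOn Set.ordConnected_Icc (isSublattice_Icc u v),
      hf.coordinatewiseConcaveOn⟩,
    fun ⟨hs, hc⟩ => .of_submodularOn_of_coordinatewiseConcaveOn Set.ordConnected_Icc hs hc⟩

/-- A function on a box satisfies the DR property iff it is submodular and
coordinate-wise concave. -/
theorem dr_iff_submodular_and_coordinatewiseConcave {n : ℕ} (u v : Fin n → ℝ) (huv : u ≤ v)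
    (f : (Fin n → ℝ) → ℝ) :
    DROn f (Set.Icc u v) ↔
      SubmodularOn f (Set.Icc u v) ∧ CoordinatewiseConcaveOn f (Set.Icc u v) :=
  dr_iff_submodular_and_coordinatewiseConcave_general u v f
end

section
/- Let P ⊆ ℝⁿ₊ be a down-closed convex set containing 0, f monotone non-decreasing and DR-submodular and differentiable on a box containing P ∨ P (coordinate-wise max of pairs from P), and x, x* ∈ P. Let v ∈ P satisfy ⟨v, ∇f(x)⟩ ≥ α·max_{w ∈ P} ⟨w, ∇f(x)⟩ − δL/2 for some α ∈ (0,1], δ ≥ 0, L > 0. Then ⟨v, ∇f(x)⟩ ≥ α·(f(x*) − f(x)) − δL/2. -/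
theorem ContinuousLinearMap.apply_le_apply_of_apply_single_le {ι : Type*} [Fintype ι]
    [DecidableEq ι] {L₁ L₂ : (ι → ℝ) →L[ℝ] ℝ} (h : ∀ i, L₁ (Pi.single i 1) ≤ L₂ (Pi.single i 1))
    {u : ι → ℝ} (hu : 0 ≤ u) : L₁ u ≤ L₂ u := by
  rw [← Finset.univ_sum_single u, map_sum, map_sum]
  gcongr with i
  rw [← mul_one (u i), ← smul_eq_mul, Pi.single_smul', map_smul, map_smul]
  exact smul_le_smul_of_nonneg_left (h i) (hu i)

theorem hasDerivAt_comp_add_smul {E : Type*} [NormedAddCommGroup E] [NormedSpace ℝ E]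
    {f : E → ℝ} {c u : E} {t : ℝ} (hf : DifferentiableAt ℝ f (c + t • u)) :
    HasDerivAt (fun s : ℝ => f (c + s • u)) (fderiv ℝ f (c + t • u) u) t :=
  hf.hasFDerivAt.comp_hasDerivAt t <| by simpa using ((hasDerivAt_id t).smul_const u).const_add c

namespace DROn

variable {n : ℕ} {f : (Fin n → ℝ) → ℝ}

theorem fderiv_single_antitone (hDR : DROn f {z | 0 ≤ z}) {a b : Fin n → ℝ}
    (hfa : DifferentiableAt ℝ f a) (hfb : DifferentiableAt ℝ f b) (ha : 0 ≤ a) (hab : a ≤ b)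
    (i : Fin n) : fderiv ℝ f b (Pi.single i 1) ≤ fderiv ℝ f a (Pi.single i 1) := by
  have hslope {c : Fin n → ℝ} (hfc : DifferentiableAt ℝ f c) :=
    (hfc.hasFDerivAt.hasLineDerivAt (Pi.single i (1 : ℝ))).tendsto_slope_zero_right
  refine le_of_tendsto_of_tendsto (hslope hfb) (hslope hfa) ?_
  filter_upwards [self_mem_nhdsWithin] with k (hk : 0 < k)
  have hmem {c : Fin n → ℝ} (hc : 0 ≤ c) : 0 ≤ c + k • Pi.single i (1 : ℝ) :=
    add_nonneg hc (smul_nonneg hk.le (Pi.single_nonneg.2 zero_le_one))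
  simp only [smul_eq_mul]
  exact mul_le_mul_of_nonneg_left
    (hDR a ha b (ha.trans hab) hab i k hk.le (hmem ha) (hmem (ha.trans hab))) (inv_nonneg.2 hk.le)

theorem fderiv_antitone (hDR : DROn f {z | 0 ≤ z}) {a b u : Fin n → ℝ}
    (hfa : DifferentiableAt ℝ f a) (hfb : DifferentiableAt ℝ f b) (ha : 0 ≤ a) (hab : a ≤ b)
    (hu : 0 ≤ u) : fderiv ℝ f b u ≤ fderiv ℝ f a u :=
  ContinuousLinearMap.apply_le_apply_of_apply_single_le
    (hDR.fderiv_single_antitone hfa hfb ha hab) hu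

theorem sub_le_fderiv (hDR : DROn f {z | 0 ≤ z}) (hf : Differentiable ℝ f) {x u : Fin n → ℝ}
    (hx : 0 ≤ x) (hu : 0 ≤ u) : f (x + u) - f x ≤ fderiv ℝ f x u := by
  obtain ⟨c, ⟨hc0, -⟩, hc⟩ := exists_hasDerivAt_eq_slope (fun t : ℝ => f (x + t • u))
    (fun t => fderiv ℝ f (x + t • u) u) zero_lt_one
    (hf.continuous.comp (by fun_prop)).continuousOn (fun t _ => hasDerivAt_comp_add_smul (hf _))
  have hxc : x ≤ x + c • u := le_add_of_nonneg_right (smul_nonneg hc0.le hu)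
  simp only [one_smul, zero_smul, add_zero, sub_zero, div_one] at hc
  rw [← hc]
  exact hDR.fderiv_antitone (hf x) (hf _) hx hxc hu

end DROn

theorem frankWolfe_linearization_lemma_general {n : ℕ}
    (f : (Fin n → ℝ) → ℝ) (hf : Differentiable ℝ f)
    (hmono : ∀ a b : Fin n → ℝ, 0 ≤ a → a ≤ b → f a ≤ f b)
    (hDR : DROn f {z : Fin n → ℝ | 0 ≤ z})
    (P : Set (Fin n → ℝ))
    (hPpos : P ⊆ {z : Fin n → ℝ | 0 ≤ z})
    (hPdc : ∀ y ∈ P, ∀ z : Fin n → ℝ, 0 ≤ z → z ≤ y → z ∈ P)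
    (α δ L : ℝ) (hα : 0 < α)
    (x xstar : Fin n → ℝ) (hx : x ∈ P) (hxstar : xstar ∈ P)
    (v : Fin n → ℝ)
    (hv : ∀ w ∈ P, fderiv ℝ f x v ≥ α * fderiv ℝ f x w - δ * L / 2) :
    fderiv ℝ f x v ≥ α * (f xstar - f x) - δ * L / 2 := by
  have hx0 : 0 ≤ x := hPpos hx
  have hxstar0 : 0 ≤ xstar := hPpos hxstar
  set u := x ⊔ xstar - x
  have hu0 : 0 ≤ u := sub_nonneg.2 le_sup_left
  have hu_le : u ≤ xstar :=
    sub_le_iff_le_add.2 (sup_le (le_add_of_nonneg_left hxstar0) (le_add_of_nonneg_right hx0))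
  have hgain : f xstar ≤ f (x + u) :=
    hmono _ _ hxstar0 (by rw [add_sub_cancel]; exact le_sup_right)
  have hconc : f (x + u) - f x ≤ fderiv ℝ f x u := hDR.sub_le_fderiv hf hx0 hu0
  calc fderiv ℝ f x v ≥ α * fderiv ℝ f x u - δ * L / 2 := hv u (hPdc xstar hxstar u hu0 hu_le)
    _ ≥ α * (f xstar - f x) - δ * L / 2 := by gcongr; linarith

/-- Key lemma for the Frank-Wolfe variant: if `v ∈ P` approximately maximizes the linear
surrogate `w ↦ ⟨w, ∇f(x)⟩` over the down-closed convex set `P`, then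
`⟨v, ∇f(x)⟩ ≥ α (f(x*) − f(x)) − δL/2`. -/
theorem frankWolfe_linearization_lemma {n : ℕ}
    (f : (Fin n → ℝ) → ℝ) (hf : Differentiable ℝ f)
    (hmono : ∀ a b : Fin n → ℝ, 0 ≤ a → a ≤ b → f a ≤ f b)
    (hDR : DROn f {z : Fin n → ℝ | 0 ≤ z})
    (P : Set (Fin n → ℝ)) (hPconv : Convex ℝ P)
    (hPpos : P ⊆ {z : Fin n → ℝ | 0 ≤ z}) (hP0 : (0 : Fin n → ℝ) ∈ P)
    (hPdc : ∀ y ∈ P, ∀ z : Fin n → ℝ, 0 ≤ z → z ≤ y → z ∈ P)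
    (α δ L : ℝ) (hα : 0 < α) (hα1 : α ≤ 1) (hδ : 0 ≤ δ) (hL : 0 < L)
    (x xstar : Fin n → ℝ) (hx : x ∈ P) (hxstar : xstar ∈ P)
    (v : Fin n → ℝ) (hvP : v ∈ P)
    (hv : ∀ w ∈ P, fderiv ℝ f x v ≥ α * fderiv ℝ f x w - δ * L / 2) :
    fderiv ℝ f x v ≥ α * (f xstar - f x) - δ * L / 2 :=
  frankWolfe_linearization_lemma_general f hf hmono hDR P hPpos hPdc α δ L hα x xstar hx hxstar v hv
end

section
/- Let Rₛ : [0, ū] → ℝ be monotone non-decreasing and submodular for each s, and let R̄ₜ : [0, ū] → ℝ be monotone non-increasing and submodular for each t, and let φ : ℝ → ℝ be arbitrary. Then f(x) := α ∑_{s : xₛ = 0} Rₛ(x) + β ∑_{t : xₜ ≠ 0} φ(xₜ) + γ ∑_{t : xₜ ≠ 0} R̄ₜ(x), with α, β, γ ≥ 0, is submodular on [0, ū] ⊆ ℝⁿ₊: f(a) + f(b) ≥ f(a ⊔ b) + f(a ⊓ b) for all a, b ∈ [0, ū]. -/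
open Finset

open Classical in
/-- The revenue objective
`f(x) = α ∑_{s : xₛ = 0} Rₛ(x) + β ∑_{t : xₜ ≠ 0} φ(xₜ) + γ ∑_{t : xₜ ≠ 0} R̄ₜ(x)`
is submodular on `[0, ū]` when each `Rₛ` is non-decreasing submodular and each `R̄ₜ` is
non-increasing submodular. -/
theorem revenue_submodular {n : ℕ} (ubar : Fin n → ℝ) (hubar : 0 ≤ ubar)
    (R Rbar : Fin n → (Fin n → ℝ) → ℝ) (φ : ℝ → ℝ) (α β γ : ℝ)
    (hα : 0 ≤ α) (hβ : 0 ≤ β) (hγ : 0 ≤ γ)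
    (hRmono : ∀ s, ∀ a ∈ Set.Icc (0 : Fin n → ℝ) ubar, ∀ b ∈ Set.Icc (0 : Fin n → ℝ) ubar,
      a ≤ b → R s a ≤ R s b)
    (hRsub : ∀ s, SubmodularOn (R s) (Set.Icc 0 ubar))
    (hRbarmono : ∀ t, ∀ a ∈ Set.Icc (0 : Fin n → ℝ) ubar,
      ∀ b ∈ Set.Icc (0 : Fin n → ℝ) ubar, a ≤ b → Rbar t b ≤ Rbar t a)
    (hRbarsub : ∀ t, SubmodularOn (Rbar t) (Set.Icc 0 ubar)) :
    SubmodularOn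
      (fun x =>
        α * (∑ s, if x s = 0 then R s x else 0) +
          β * (∑ t, if x t ≠ 0 then φ (x t) else 0) +
          γ * (∑ t, if x t ≠ 0 then Rbar t x else 0))
      (Set.Icc 0 ubar) := by
  intro x hx y hy
  have hsup : x ⊔ y ∈ Set.Icc (0 : Fin n → ℝ) ubar :=
    ⟨le_trans hx.1 le_sup_left, sup_le hx.2 hy.2⟩
  have hinf : x ⊓ y ∈ Set.Icc (0 : Fin n → ℝ) ubar :=
    ⟨le_inf hx.1 hy.1, le_trans inf_le_left hx.2⟩
  -- part A
  have hA : (∑ s, if (x ⊔ y) s = 0 then R s (x ⊔ y) else 0) +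
      (∑ s, if (x ⊓ y) s = 0 then R s (x ⊓ y) else 0) ≤
      (∑ s, if x s = 0 then R s x else 0) + (∑ s, if y s = 0 then R s y else 0) := by
    rw [← Finset.sum_add_distrib, ← Finset.sum_add_distrib]
    apply Finset.sum_le_sum
    intro s _
    have hx0 : (0 : ℝ) ≤ x s := hx.1 s
    have hy0 : (0 : ℝ) ≤ y s := hy.1 s
    have hsupa : (x ⊔ y) s = max (x s) (y s) := rfl
    have hinfa : (x ⊓ y) s = min (x s) (y s) := rfl
    rcases eq_or_ne (x s) 0 with ha | ha <;> rcases eq_or_ne (y s) 0 with hb | hb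
    · simp only [hsupa, hinfa, ha, hb, max_self, min_self, if_pos rfl]
      exact hRsub s x hx y hy
    · have h1 : (x ⊔ y) s ≠ 0 := by
        rw [hsupa]
        have : 0 < y s := lt_of_le_of_ne hy0 (Ne.symm hb)
        positivity
      have h2 : (x ⊓ y) s = 0 := by rw [hinfa, ha]; simp [min_eq_left hy0]
      have := hRmono s (x ⊓ y) hinf x hx inf_le_left
      simp only [h1, h2, ha, hb, if_true, if_false, if_pos rfl, if_neg h1]
      simpa using this
    · have h1 : (x ⊔ y) s ≠ 0 := by
        rw [hsupa]
        have : 0 < x s := lt_of_le_of_ne hx0 (Ne.symm ha)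
        positivity
      have h2 : (x ⊓ y) s = 0 := by rw [hinfa, hb]; simp [min_eq_right hx0]
      have := hRmono s (x ⊓ y) hinf y hy inf_le_right
      simp only [h1, h2, ha, hb, if_true, if_false, if_pos rfl, if_neg h1]
      simpa using this
    · have hxp : 0 < x s := lt_of_le_of_ne hx0 (Ne.symm ha)
      have hyp : 0 < y s := lt_of_le_of_ne hy0 (Ne.symm hb)
      have h1 : max (x s) (y s) ≠ 0 := by positivity
      have h2 : min (x s) (y s) ≠ 0 := by positivity
      simp [hsupa, hinfa, h1, h2, ha, hb]
  -- part B (equality)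
  have hB : (∑ t, if (x ⊔ y) t ≠ 0 then φ ((x ⊔ y) t) else 0) +
      (∑ t, if (x ⊓ y) t ≠ 0 then φ ((x ⊓ y) t) else 0) =
      (∑ t, if x t ≠ 0 then φ (x t) else 0) + (∑ t, if y t ≠ 0 then φ (y t) else 0) := by
    rw [← Finset.sum_add_distrib, ← Finset.sum_add_distrib]
    apply Finset.sum_congr rfl
    intro t _
    have hsupa : (x ⊔ y) t = max (x t) (y t) := rfl
    have hinfa : (x ⊓ y) t = min (x t) (y t) := rfl
    rcases le_total (x t) (y t) with h | h
    · rw [hsupa, hinfa, max_eq_right h, min_eq_left h, add_comm]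
    · rw [hsupa, hinfa, max_eq_left h, min_eq_right h]
  -- part C
  have hC : (∑ t, if (x ⊔ y) t ≠ 0 then Rbar t (x ⊔ y) else 0) +
      (∑ t, if (x ⊓ y) t ≠ 0 then Rbar t (x ⊓ y) else 0) ≤
      (∑ t, if x t ≠ 0 then Rbar t x else 0) + (∑ t, if y t ≠ 0 then Rbar t y else 0) := by
    rw [← Finset.sum_add_distrib, ← Finset.sum_add_distrib]
    apply Finset.sum_le_sum
    intro t _
    have hx0 : (0 : ℝ) ≤ x t := hx.1 t
    have hy0 : (0 : ℝ) ≤ y t := hy.1 t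
    have hsupa : (x ⊔ y) t = max (x t) (y t) := rfl
    have hinfa : (x ⊓ y) t = min (x t) (y t) := rfl
    rcases eq_or_ne (x t) 0 with ha | ha <;> rcases eq_or_ne (y t) 0 with hb | hb
    · simp [hsupa, hinfa, ha, hb]
    · have h1 : max (x t) (y t) ≠ 0 := by
        have : 0 < y t := lt_of_le_of_ne hy0 (Ne.symm hb)
        positivity
      have h2 : min (x t) (y t) = 0 := by rw [ha]; simp [min_eq_left hy0]
      simp only [hsupa, hinfa, ne_eq, h1, h2, ha, hb, not_true_eq_false, not_false_eq_true,
        if_true, if_false, if_neg, if_pos]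
      have := hRbarmono t y hy (x ⊔ y) hsup le_sup_right
      simp_all
    · have h1 : max (x t) (y t) ≠ 0 := by
        have : 0 < x t := lt_of_le_of_ne hx0 (Ne.symm ha)
        positivity
      have h2 : min (x t) (y t) = 0 := by rw [hb]; simp [min_eq_right hx0]
      have := hRbarmono t x hx (x ⊔ y) hsup le_sup_left
      simp_all
    · have hxp : 0 < x t := lt_of_le_of_ne hx0 (Ne.symm ha)
      have hyp : 0 < y t := lt_of_le_of_ne hy0 (Ne.symm hb)
      have h1 : max (x t) (y t) ≠ 0 := by positivity
      have h2 : min (x t) (y t) ≠ 0 := by positivity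
      simp only [hsupa, hinfa, ne_eq, h1, h2, ha, hb, not_false_eq_true, if_true]
      exact hRbarsub t x hx y hy
  have hA' := mul_le_mul_of_nonneg_left hA hα
  have hB' := mul_le_mul_of_nonneg_left hB.le hβ
  have hC' := mul_le_mul_of_nonneg_left hC hγ
  simp only [mul_add] at hA' hB' hC' ⊢
  linarith
end
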